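/- arXiv:2602.19973 — 3 statements merged into one kernel-verified Lean document; each statement's English description precedes it below -/
import Mathlib

section
/- The predicate-transformer monad hist satisfies associativity: for every monotonic predicate transformer w : hist α and continuations f : α → hist β and g : β → hist γ, hist_bind (hist_bind w f) g is hist_equiv to hist_bind w (fun x => hist_bind (f x) g). -/
set_option linter.unusedVariables false

/-- File descriptors, modelled as natural numbers. -/
abbrev file_descr := Nat

/-- An event records an IO operation together with its argument and result
(left injection for success, right injection for failure). -/
inductive event : Type where
| EvOpen : String → Sum file_descr String → event
| EvRead : file_descr → Sum String String → event
| EvWrite : file_descr × String → Sum Unit String → event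
| EvClose : file_descr → Sum Unit String → event

/-- A history is a list of past events, most recent first. -/
abbrev history := List event

/-- A file descriptor fresh with respect to a history. -/
def fresh_fd (h : history) : file_descr := h.length

/-- An event is admissible w.r.t. a history: successful opens must use a fresh
file descriptor. -/
def ev_ok (h : history) : event → Prop
| event.EvOpen _ (Sum.inl fd) => fd = fresh_fd h
| _ => True

/-- Well-formedness of a trace with respect to a history. -/
def well_formed_local_trace (h : history) : List event → Prop
| [] => True
| ev :: tl => ev_ok h ev ∧ well_formed_local_trace (ev :: h) tl

/-- Local traces relative to a history `h`: traces well formed w.r.t. `h`. -/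
def local_trace (h : history) := {lt : List event // well_formed_local_trace h lt}

/-- `hist_ext h lt` (written `h ++ lt` in the paper): the history obtained by
prepending the reverse of the trace `lt` to `h`. -/
def hist_ext (h : history) (lt : List event) : history := lt.reverse ++ h

theorem wf_lt_append (lt1 : List event) (h : history) (lt2 : List event)
    (h1 : well_formed_local_trace h lt1)
    (h2 : well_formed_local_trace (hist_ext h lt1) lt2) :
    well_formed_local_trace h (lt1 ++ lt2) := by
  induction lt1 generalizing h with
  | nil => simpa [hist_ext] using h2
  | cons ev tl ih =>
    obtain ⟨hok, htl⟩ := h1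
    refine ⟨hok, ih (ev :: h) htl ?_⟩
    simpa [hist_ext, List.append_assoc] using h2

/-- Concatenation of local traces (written `lt @ lt'` in the paper). -/
def ltapp {h : history} (lt1 : local_trace h) (lt2 : local_trace (hist_ext h lt1.val)) :
    local_trace h :=
  ⟨lt1.val ++ lt2.val, wf_lt_append lt1.val h lt2.val lt1.property lt2.property⟩

/-- The empty local trace. -/
def nil_lt (h : history) : local_trace h := ⟨[], trivial⟩

/-- Postconditions over a local trace and a result. -/
def hist_post (h : history) (α : Type) := local_trace h → α → Prop

/-- Predicate transformers mapping postconditions to preconditions. -/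
def hist0 (α : Type) := (h : history) → hist_post h α → Prop

/-- Monotonicity of a predicate transformer. -/
def hist_wp_monotonic {α : Type} (wp : hist0 α) : Prop :=
  ∀ (h : history) (p1 p2 : hist_post h α),
    (∀ lt r, p1 lt r → p2 lt r) → wp h p1 → wp h p2

/-- The hist monad: monotonic predicate transformers. -/
def hist (α : Type) := {wp : hist0 α // hist_wp_monotonic wp}

def hist_return {α : Type} (x : α) : hist α :=
  ⟨fun h p => p (nil_lt h) x, fun h p1 p2 hp hw => hp _ _ hw⟩

def hist_bind {α β : Type} (w : hist α) (k : α → hist β) : hist β :=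
  ⟨fun h p => w.val h (fun lt r => (k r).val (hist_ext h lt.val)
      (fun lt' r' => p (ltapp lt lt') r')),
   by
     intro h p1 p2 hp hw
     refine w.property h _ _ ?_ hw
     intro lt r hk
     refine (k r).property _ _ _ ?_ hk
     intro lt' r' hpp
     exact hp _ _ hpp⟩

/-- Pointwise equivalence of predicate transformers. -/
def hist_equiv {α : Type} (w1 w2 : hist α) : Prop := ∀ h p, w1.val h p ↔ w2.val h p

/-- The file operations. -/
inductive io_ops : Type where
| OOpen | ORead | OWrite | OClose

/-- Argument type of each operation. -/
def io_args : io_ops → Type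
| .OOpen => String
| .ORead => file_descr
| .OWrite => file_descr × String
| .OClose => file_descr

/-- Result type of each operation (Either-valued: possibly failing). -/
def io_res (o : io_ops) : io_args o → Type := fun _ =>
  match o with
  | .OOpen => Sum file_descr String
  | .ORead => Sum String String
  | .OWrite => Sum Unit String
  | .OClose => Sum Unit String

/-- The free IO monad. -/
inductive io (α : Type) : Type where
| Return : α → io α
| Call : (o : io_ops) → (args : io_args o) → (io_res o args → io α) → io α

def io_return {α : Type} (x : α) : io α := .Return x

def io_bind {α β : Type} : io α → (α → io β) → io β
| .Return x, k => k x
| .Call o args ok, k => .Call o args (fun i => io_bind (ok i) k)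

/-- Turn an operation call and result into an event. -/
def op_to_ev : (o : io_ops) → (args : io_args o) → io_res o args → event
| .OOpen, s, r => .EvOpen s r
| .ORead, fd, r => .EvRead fd r
| .OWrite, a, r => .EvWrite a r
| .OClose, fd, r => .EvClose fd r

/-- The operation's postcondition: a successful open returns `fresh_fd h`. -/
def io_post (h : history) : (o : io_ops) → (args : io_args o) → io_res o args → Prop
| .OOpen, _, Sum.inl fd => fd = fresh_fd h
| .OOpen, _, Sum.inr _ => True
| .ORead, _, _ => True
| .OWrite, _, _ => True
| .OClose, _, _ => True

/-- Specification of an operation as a predicate transformer. -/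
def op_wp (o : io_ops) (args : io_args o) : hist (io_res o args) :=
  ⟨fun h p => ∀ (lt : local_trace h) (r : io_res o args),
      (io_post h o args r ∧ lt.val = [op_to_ev o args r]) → p lt r,
   fun h p1 p2 hp hw lt r hc => hp _ _ (hw lt r hc)⟩

/-- Weakest-precondition semantics of free IO computations. -/
def theta {α : Type} : io α → hist α
| .Return x => hist_return x
| .Call o args k => hist_bind (op_wp o args) (fun r => theta (k r))

/-- The behavior (strongest postcondition) of an IO computation. -/
def fs_beh {α : Type} (m : io α) (h : history) (lt : local_trace h) (r : α) : Prop :=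
  ∀ p : hist_post h α, (theta m).val h p → p lt r

lemma hist_ext_assoc (h : history) (a b : List event) :
    hist_ext (hist_ext h a) b = hist_ext h (a ++ b) := by
  simp [hist_ext, List.append_assoc]

lemma wval_congr {δ : Type} (w : hist δ) {h h' : history} (e : h = h')
    (p : hist_post h' δ) :
    w.val h' p ↔ w.val h (fun lt r => p ⟨lt.val, e ▸ lt.property⟩ r) := by
  subst e; rfl

/-- associativity of the `hist` monad. -/
theorem hist_assoc {α β γ : Type} (w : hist α) (f : α → hist β) (g : β → hist γ) :
    hist_equiv (hist_bind (hist_bind w f) g)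
               (hist_bind w (fun x => hist_bind (f x) g)) := by
  intro h p
  show w.val h _ ↔ w.val h _
  have key : ∀ (lt : local_trace h) (r : α),
      ((f r).val (hist_ext h lt.val)
        (fun lt' r' => (g r').val (hist_ext h (ltapp lt lt').val)
          (fun lt'' r'' => p (ltapp (ltapp lt lt') lt'') r''))) ↔
      ((f r).val (hist_ext h lt.val)
        (fun lt' r' => (g r').val (hist_ext (hist_ext h lt.val) lt'.val)
          (fun lt'' r'' => p (ltapp lt (ltapp lt' lt'')) r''))) := by
    intro lt r
    constructor <;> intro hw <;>
      refine (f r).property _ _ _ ?_ hw <;> intro lt' r' hg <;>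
      [(refine (wval_congr (g r')
          ((hist_ext_assoc h lt.val lt'.val).symm :
            hist_ext h (ltapp lt lt').val = hist_ext (hist_ext h lt.val) lt'.val)
          _).mpr ?_;
        refine (g r').property _ _ _ ?_ hg);
       (replace hg := (wval_congr (g r')
          ((hist_ext_assoc h lt.val lt'.val).symm :
            hist_ext h (ltapp lt lt').val = hist_ext (hist_ext h lt.val) lt'.val)
          _).mp hg;
        refine (g r').property _ _ _ ?_ hg)] <;>
      intro lt'' r'' hp <;>
      · have heq : (ltapp lt (ltapp lt'
              (⟨lt''.val, ((hist_ext_assoc h lt.val lt'.val).symm :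
                hist_ext h (ltapp lt lt').val
                  = hist_ext (hist_ext h lt.val) lt'.val) ▸ lt''.property⟩))) =
            ltapp (ltapp lt lt') lt'' := by
          apply Subtype.ext; simp [ltapp, List.append_assoc]
        first
          | (rw [heq]; exact hp)
          | (rw [heq] at hp; exact hp)
  constructor <;> intro hw <;> refine w.property h _ _ ?_ hw <;> intro lt r
  · exact (key lt r).mp
  · exact (key lt r).mpr
end

section
/- The weakest-precondition semantics theta is a monad morphism from the free IO monad to the hist monad: theta (io_return x) equals hist_return x, and for every computation m : io α and continuation k : α → io β, theta (io_bind m k) is hist_equiv to hist_bind (theta m) (fun x => theta (k x)). -/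
set_option linter.unusedVariables false

/-!
`theta` is the fold of the free monad `io` into `hist`, so it preserves `return` by definition
and preserves `bind` by induction on the computation, using the left unit law, associativity and
congruence of `hist_bind`. Associativity holds only up to `hist_equiv`: the histories
`(h ++ lt) ++ lt'` and `h ++ (lt @ lt')` are equal but not definitionally so, and the weakest
precondition has to be transported along that equality (`hist_val_congr`).
-/

theorem hist_equiv.symm {α : Type} {w1 w2 : hist α} (h12 : hist_equiv w1 w2) :
    hist_equiv w2 w1 :=
  fun h p => (h12 h p).symm

theorem hist_equiv.trans {α : Type} {w1 w2 w3 : hist α}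
    (h12 : hist_equiv w1 w2) (h23 : hist_equiv w2 w3) : hist_equiv w1 w3 :=
  fun h p => (h12 h p).trans (h23 h p)

theorem hist_val_iff {α : Type} (w : hist α) {h : history} {p1 p2 : hist_post h α}
    (hp : ∀ lt r, p1 lt r ↔ p2 lt r) : w.val h p1 ↔ w.val h p2 :=
  ⟨w.property h p1 p2 fun lt r => (hp lt r).mp, w.property h p2 p1 fun lt r => (hp lt r).mpr⟩

theorem hist_val_congr {α : Type} (w : hist α) {h1 h2 : history} (e : h1 = h2)
    {p1 : hist_post h1 α} {p2 : hist_post h2 α}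
    (hp : ∀ (lt : List event) (hw1 : well_formed_local_trace h1 lt)
        (hw2 : well_formed_local_trace h2 lt) (r : α), p1 ⟨lt, hw1⟩ r ↔ p2 ⟨lt, hw2⟩ r) :
    w.val h1 p1 ↔ w.val h2 p2 := by
  subst e
  exact hist_val_iff w fun lt r => hp lt.val lt.property lt.property r

theorem hist_ext_append (h : history) (l1 l2 : List event) :
    hist_ext (hist_ext h l1) l2 = hist_ext h (l1 ++ l2) := by
  simp only [hist_ext, List.reverse_append, List.append_assoc]

theorem hist_bind_congr {α β : Type} (w : hist α) {k1 k2 : α → hist β}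
    (hk : ∀ x, hist_equiv (k1 x) (k2 x)) :
    hist_equiv (hist_bind w k1) (hist_bind w k2) :=
  fun _ _ => hist_val_iff w fun _ r => hk r _ _

theorem hist_bind_return {α β : Type} (x : α) (k : α → hist β) :
    hist_equiv (hist_bind (hist_return x) k) (k x) :=
  fun _ _ => Iff.rfl

theorem hist_bind_assoc {α β γ : Type} (w : hist α) (k1 : α → hist β) (k2 : β → hist γ) :
    hist_equiv (hist_bind (hist_bind w k1) k2) (hist_bind w fun x => hist_bind (k1 x) k2) :=
  fun h p => hist_val_iff w fun lt r => hist_val_iff (k1 r) fun lt1 r1 =>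
    hist_val_congr (k2 r1) (hist_ext_append h lt.val lt1.val).symm fun lt2 _ _ r2 =>
      Iff.of_eq (congrArg (p · r2) (Subtype.ext (List.append_assoc lt.val lt1.val lt2)))

theorem theta_io_bind {α β : Type} (m : io α) (k : α → io β) :
    hist_equiv (theta (io_bind m k)) (hist_bind (theta m) fun x => theta (k x)) := by
  induction m with
  | Return x => exact (hist_bind_return x fun x => theta (k x)).symm
  | Call o args ok ih =>
    exact (hist_bind_congr (op_wp o args) ih).trans
      (hist_bind_assoc (op_wp o args) (fun r => theta (ok r)) fun x => theta (k x)).symm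

/-- `theta` is a monad morphism from the free IO monad to `hist`. -/
theorem theta_monad_morphism :
    (∀ (α : Type) (x : α), theta (io_return x) = hist_return x) ∧
    (∀ (α β : Type) (m : io α) (k : α → io β),
      hist_equiv (theta (io_bind m k)) (hist_bind (theta m) (fun x => theta (k x)))) :=
  ⟨fun _ _ => rfl, fun _ _ => theta_io_bind⟩
end

section
/- The behavior predicate fs_beh composes along the monadic bind: for every m : io α, continuation k : α → io β, history h, local trace lt1 relative to h, intermediate result r1 : α, local trace lt2 relative to h ++ lt1, and result r : β, if fs_beh m h lt1 r1 and fs_beh (k r1) (h ++ lt1) lt2 r hold, then fs_beh (io_bind m k) h (lt1 @ lt2) r holds. -/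
set_option linter.unusedVariables false

theorem local_trace.val_cast {h1 h2 : history} (e : h1 = h2) (lt : local_trace h1) :
    (e ▸ lt : local_trace h2).val = lt.val := by
  subst e; rfl

theorem ltapp_assoc {h : history} (lt1 : local_trace h) (lt2 : local_trace (hist_ext h lt1.val))
    (lt3 : local_trace (hist_ext (hist_ext h lt1.val) lt2.val)) :
    ltapp (ltapp lt1 lt2) (hist_ext_append h lt1.val lt2.val ▸ lt3) = ltapp lt1 (ltapp lt2 lt3) :=
  Subtype.ext <| by simp only [ltapp, local_trace.val_cast, List.append_assoc]

theorem hist.mono_cast {α : Type} (w : hist α) {h1 h2 : history} (e : h1 = h2)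
    {p1 : hist_post h1 α} {p2 : hist_post h2 α} (hp : ∀ lt r, p1 lt r → p2 (e ▸ lt) r)
    (hw : w.val h1 p1) : w.val h2 p2 := by
  subst e
  exact w.property h1 p1 p2 hp hw

/-- One half of `theta` being a monad morphism. -/
theorem hist_bind_theta_of_theta_io_bind {α β : Type} (m : io α) (k : α → io β) (h : history)
    (p : hist_post h β) (hw : (theta (io_bind m k)).val h p) :
    (hist_bind (theta m) (fun r => theta (k r))).val h p := by
  induction m generalizing h p with
  | Return x => exact hw -- `ltapp (nil_lt h) lt` is `lt` by structure eta
  | Call o args g ih =>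
    intro lt i hcall
    refine (theta (g i)).property _ _ _ ?_ (ih i _ _ (hw lt i hcall))
    intro lt2 a hk
    refine hist.mono_cast (theta (k a)) (hist_ext_append h lt.val lt2.val) ?_ hk
    intro lt3 b hp
    rwa [ltapp_assoc]

/-- `fs_beh` composes along monadic bind. -/
theorem fs_beh_bind_compose {α β : Type} (m : io α) (k : α → io β) (h : history)
    (lt1 : local_trace h) (r1 : α) (lt2 : local_trace (hist_ext h lt1.val)) (r : β)
    (h1 : fs_beh m h lt1 r1) (h2 : fs_beh (k r1) (hist_ext h lt1.val) lt2 r) :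
    fs_beh (io_bind m k) h (ltapp lt1 lt2) r :=
  fun p hw => h2 _ (h1 _ (hist_bind_theta_of_theta_io_bind m k h p hw))
end
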